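/- Let x and y be rational numbers satisfying d(x,y) = 0 and 2x − 3y − 3 ≠ 0, and set U := (1176x − 468y − 468)/(2x − 3y − 3) and V := 15552(x + y − 1)/(2x − 3y − 3). Then V² = U³ − 384048·U + 82988928, i.e. (U,V) is a rational point on the short Weierstrass elliptic curve E₀ : V² = U³ − 384048U + 82988928. -/

import Mathlib

def d (x y : ℚ) : ℚ := x^2*y + 3*x^2 - x*y - 3*y^2 - 3*x - 3*y

theorem sq_div_eq_cubic_div {K : Type*} [Field K] {a b D A B : K} (hD : D ≠ 0)
    (h : a ^ 2 * D = b ^ 3 - A * b * D ^ 2 + B * D ^ 3) :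
    (a / D) ^ 2 = (b / D) ^ 3 - A * (b / D) + B := by
  field_simp
  linear_combination h

theorem weierstrass_cleared_sub_eq_mul_d (x y : ℚ) :
    (1176*x - 468*y - 468) ^ 3 - 384048 * (1176*x - 468*y - 468) * (2*x - 3*y - 3) ^ 2
      + 82988928 * (2*x - 3*y - 3) ^ 3 - (15552*(x + y - 1)) ^ 2 * (2*x - 3*y - 3)
      = 967458816 * d x y := by
  unfold d
  ring

theorem maps_to_weierstrass (x y : ℚ) (hd : d x y = 0)
    (hden : 2*x - 3*y - 3 ≠ 0) :
    (15552*(x + y - 1) / (2*x - 3*y - 3))^2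
      = ((1176*x - 468*y - 468) / (2*x - 3*y - 3))^3
        - 384048 * ((1176*x - 468*y - 468) / (2*x - 3*y - 3))
        + 82988928 := by
  apply sq_div_eq_cubic_div hden
  linear_combination -weierstrass_cleared_sub_eq_mul_d x y - 967458816 * hd
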